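/- arXiv:1109.4434 — 2 statements merged into one kernel-verified Lean document; each statement's English description precedes it below -/
import Mathlib

section
/- Let I = (I_1,...,I_n) be a Grassmann necklace with I_i = I_j (i ≠ j), write I¹ = I_i ∩ [i,j), I² = I_i ∩ [j,i). If J ∈ M_I is weakly separated from I_i = I¹ ∪ I², then J ∩ [i,j) = I¹ or J ∩ [j,i) = I². -/
def cpos {n : ℕ} (i a : Fin n) : ℕ := ((a - i : Fin n) : ℕ)

def CyclicallyOrdered {n : ℕ} (a b c d : Fin n) : Prop :=
  0 < cpos a b ∧ cpos a b < cpos a c ∧ cpos a c < cpos a d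

instance {n : ℕ} (a b c d : Fin n) : Decidable (CyclicallyOrdered a b c d) := by
  unfold CyclicallyOrdered; infer_instance

def WeaklySeparated {n : ℕ} (I J : Finset (Fin n)) : Prop :=
  ¬ ∃ a b a' b' : Fin n, CyclicallyOrdered a b a' b' ∧
    a ∈ I \ J ∧ a' ∈ I \ J ∧ b ∈ J \ I ∧ b' ∈ J \ I

def cycIco {n : ℕ} (i j : Fin n) : Finset (Fin n) :=
  Finset.univ.filter (fun x => cpos i x < cpos i j)

def cycIcc {n : ℕ} (i j : Fin n) : Finset (Fin n) :=
  Finset.univ.filter (fun x => cpos i x ≤ cpos i j)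

def cycOpen {n : ℕ} (i j : Fin n) : Finset (Fin n) :=
  Finset.univ.filter (fun x => 0 < cpos i x ∧ cpos i x < cpos i j)

def IsGrassmannNecklace {n : ℕ} [NeZero n] (k : ℕ) (I : Fin n → Finset (Fin n)) : Prop :=
  (∀ i, (I i).card = k) ∧ (∀ i, I i \ {i} ⊆ I (i + 1)) ∧ (∀ i, i ∉ I i → I (i + 1) = I i)

def leShift {n : ℕ} (i : Fin n) (A B : Finset (Fin n)) : Prop :=
  List.Forall₂ (· ≤ ·) ((A.image (fun x => x - i)).sort (· ≤ ·))
    ((B.image (fun x => x - i)).sort (· ≤ ·))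

def MemPositroid {n : ℕ} (I : Fin n → Finset (Fin n)) (J : Finset (Fin n)) : Prop :=
  ∀ i, leShift i (I i) J

def IsWSCollection {n : ℕ} (C : Finset (Finset (Fin n))) : Prop :=
  ∀ X ∈ C, ∀ Y ∈ C, WeaklySeparated X Y

def IsMaxWSCollection {n : ℕ} (k : ℕ) (C : Finset (Finset (Fin n))) : Prop :=
  (∀ X ∈ C, X.card = k) ∧ IsWSCollection C ∧
  ∀ C' : Finset (Finset (Fin n)), C ⊆ C' → (∀ X ∈ C', X.card = k) → IsWSCollection C' → C' = C

/-! The shifted termwise order `A ≤ᵢ B` implies that, on every initial segment `[i, i + s)` of the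
cyclic order starting at `i`, `B` has at most as many elements as `A`. If `J` and `I_i`
agree in size on `[i, j)` but differ there, the first place where they differ below `j` (counted
from `i`) is an element `b₁ ∈ I_i \ J`, followed by some `a₁ ∈ J \ I_i` before `j`. Since
`I_j = I_i`, the same argument from `j` gives `b₂ ∈ I_i \ J` followed by `a₂ ∈ J \ I_i` in
`[j, i)`. Then `a₁, b₂, a₂, b₁` are cyclically ordered, contradicting weak separation. The sizes
agree on both arcs because `J` has at most as many elements as `I_i` on each of them and
`|J| = |I_i|`. -/

open Finset

theorem List.Forall₂.countP_le {α β : Type*} {R : α → β → Prop} {l₁ : List α} {l₂ : List β}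
    (h : List.Forall₂ R l₁ l₂) {p : α → Bool} {q : β → Bool} (hpq : ∀ a b, R a b → q b → p a) :
    l₂.countP q ≤ l₁.countP p := by
  induction h with
  | nil => simp
  | @cons a b l₁ l₂ hab _ ih =>
    simp only [List.countP_cons]
    have := hpq a b hab
    split_ifs <;> simp_all
    omega

section LinearOrder

variable {α β : Type*} [LinearOrder α]

theorem Finset.card_filter_eq_countP_sort (s : Finset α) (p : α → Prop) [DecidablePred p] :
    #(s.filter p) = (s.sort (· ≤ ·)).countP (fun x => decide (p x)) := by
  rw [← Multiset.coe_countP, sort_eq, Multiset.countP_eq_card_filter, card_def,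
    filter_val]

theorem exists_sdiff_lt_of_card_filter_le [DecidableEq β] {f : β → α} (hf : f.Injective)
    {A B : Finset β} (hdom : ∀ s, #(B.filter (f · ≤ s)) ≤ #(A.filter (f · ≤ s))) {t : α}
    (hcard : #(A.filter (f · < t)) = #(B.filter (f · < t)))
    (hne : A.filter (f · < t) ≠ B.filter (f · < t)) :
    ∃ b ∈ A \ B, ∃ a ∈ B \ A, f b < f a ∧ f a < t := by
  set D := (symmDiff A B).filter (f · < t)
  have hD : D.Nonempty := by
    by_contra! hD
    refine hne (ext fun x => ?_)
    have : x ∉ D := by simp [hD]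
    simp only [D, mem_filter, mem_symmDiff] at this ⊢
    tauto
  obtain ⟨y, hyD, hymin⟩ := D.exists_min_image f hD
  have hyt : f y < t := (mem_filter.1 hyD).2
  have below_y : ∀ x, f x < f y → (x ∈ A ↔ x ∈ B) := by
    intro x hx
    by_contra hAB
    have : x ∈ D := by
      simp only [D, mem_filter, mem_symmDiff]
      exact ⟨by tauto, hx.trans hyt⟩
    exact absurd (hymin x this) (not_le.2 hx)
  have hyAB : y ∈ A \ B := by
    have hy := (mem_filter.1 hyD).1
    rw [mem_symmDiff] at hy
    refine mem_sdiff.2 <| hy.resolve_right fun ⟨hyB, hyA⟩ => ?_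
    have hsub : A.filter (f · ≤ f y) ⊂ B.filter (f · ≤ f y) := by
      refine ssubset_iff_of_subset (fun x hx => ?_) |>.2 ⟨y, by simp [hyB], by simp [hyA]⟩
      rw [mem_filter] at hx ⊢
      rcases hx.2.lt_or_eq with hlt | heq
      · exact ⟨(below_y x hlt).1 hx.1, hx.2⟩
      · exact absurd (hf heq ▸ hx.1) hyA
    exact absurd (hdom (f y)) (not_le.2 (card_lt_card hsub))
  obtain ⟨x, hxBA, hxt⟩ : ∃ x ∈ B \ A, f x < t := by
    by_contra! hnone
    have hsub : B.filter (f · < t) ⊂ A.filter (f · < t) := by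
      refine ssubset_iff_of_subset (fun x hx => ?_) |>.2
        ⟨y, by simp [(mem_sdiff.1 hyAB).1, hyt], by simp [(mem_sdiff.1 hyAB).2]⟩
      rw [mem_filter] at hx ⊢
      by_contra hxA
      exact absurd hx.2 (not_lt.2 (hnone x (mem_sdiff.2 ⟨hx.1, fun h => hxA ⟨h, hx.2⟩⟩)))
    exact absurd hcard (card_lt_card hsub).ne'
  have hxD : x ∈ D := by
    simp only [D, mem_filter, mem_symmDiff]
    exact ⟨Or.inr (mem_sdiff.1 hxBA), hxt⟩
  have hxy : f x ≠ f y := fun h =>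
    (mem_sdiff.1 hyAB).2 (hf h ▸ (mem_sdiff.1 hxBA).1)
  exact ⟨y, hyAB, x, hxBA, lt_of_le_of_ne (hymin x hxD) hxy.symm, hxt⟩

end LinearOrder

section Cyclic

variable {n : ℕ}

theorem cpos_eq (i x : Fin n) :
    cpos i x = if i.val ≤ x.val then x.val - i.val else x.val + n - i.val := by
  have hx := x.isLt
  show (n - i.val + x.val) % n = _
  split_ifs
  · rw [show n - i.val + x.val = x.val - i.val + n by omega, Nat.add_mod_right,
      Nat.mod_eq_of_lt (by omega)]
  · rw [Nat.mod_eq_of_lt (by omega)]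
    omega

theorem cpos_lt (i x : Fin n) : cpos i x < n := (x - i).isLt

theorem cpos_injective (i : Fin n) : (cpos i).Injective := by
  intro x y h
  have := x.isLt; have := y.isLt
  rw [cpos_eq, cpos_eq] at h
  ext
  split_ifs at h <;> omega

theorem Fin.sub_left_injective (i : Fin n) : Function.Injective (· - i : Fin n → Fin n) :=
  fun _ _ h => cpos_injective i (congrArg Fin.val h)

theorem card_filter_cpos (i : Fin n) (S : Finset (Fin n)) (p : ℕ → Prop) [DecidablePred p] :
    #((S.image (· - i)).filter (fun u => p u.val)) = #(S.filter (fun x => p (cpos i x))) := by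
  rw [filter_image, card_image_of_injective _ (Fin.sub_left_injective i)]
  rfl

theorem leShift.card_eq {i : Fin n} {A B : Finset (Fin n)} (h : leShift i A B) : #A = #B := by
  simpa [card_image_of_injective _ (Fin.sub_left_injective i)] using h.length_eq

theorem leShift.card_filter_le {i : Fin n} {A B : Finset (Fin n)} (h : leShift i A B)
    {p : ℕ → Prop} [DecidablePred p] (hp : ∀ a b, a ≤ b → p b → p a) :
    #(B.filter (fun x => p (cpos i x))) ≤ #(A.filter (fun x => p (cpos i x))) := by
  rw [← card_filter_cpos, ← card_filter_cpos, card_filter_eq_countP_sort,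
    card_filter_eq_countP_sort]
  exact h.countP_le fun a b hab hb => by simpa using hp a b hab (by simpa using hb)

theorem inter_cycIco_eq_filter (S : Finset (Fin n)) (i j : Fin n) :
    S ∩ cycIco i j = S.filter (fun x => cpos i x < cpos i j) := by
  ext x
  simp [cycIco]

theorem leShift.exists_sdiff_lt {i j : Fin n} {A B : Finset (Fin n)} (h : leShift i A B)
    (hcard : #(A ∩ cycIco i j) = #(B ∩ cycIco i j)) (hne : A ∩ cycIco i j ≠ B ∩ cycIco i j) :
    ∃ b ∈ A \ B, ∃ a ∈ B \ A, cpos i b < cpos i a ∧ cpos i a < cpos i j := by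
  rw [inter_cycIco_eq_filter, inter_cycIco_eq_filter] at hcard hne
  exact exists_sdiff_lt_of_card_filter_le (cpos_injective i)
    (fun s => h.card_filter_le fun _ _ hab hb => hab.trans hb) hcard hne

theorem card_inter_cycIco_add (S : Finset (Fin n)) {i j : Fin n} (hij : i ≠ j) :
    #(S ∩ cycIco i j) + #(S ∩ cycIco j i) = #S := by
  have hcompl : ∀ x, cpos j x < cpos j i ↔ ¬ cpos i x < cpos i j := by
    have hne : i.val ≠ j.val := Fin.val_ne_of_ne hij
    intro x
    have := x.isLt; have := i.isLt; have := j.isLt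
    rw [cpos_eq, cpos_eq, cpos_eq, cpos_eq]
    split_ifs <;> omega
  rw [inter_cycIco_eq_filter, inter_cycIco_eq_filter, filter_congr fun x _ => hcompl x,
    card_filter_add_card_filter_not]

theorem leShift.card_inter_cycIco_eq {i j : Fin n} {A B : Finset (Fin n)} (hij : i ≠ j)
    (hi : leShift i A B) (hj : leShift j A B) :
    #(A ∩ cycIco i j) = #(B ∩ cycIco i j) ∧ #(A ∩ cycIco j i) = #(B ∩ cycIco j i) := by
  have h₁ := hi.card_filter_le (p := (· < cpos i j)) fun _ _ hab hb => hab.trans_lt hb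
  have h₂ := hj.card_filter_le (p := (· < cpos j i)) fun _ _ hab hb => hab.trans_lt hb
  simp only [← inter_cycIco_eq_filter] at h₁ h₂
  have := hi.card_eq
  have := card_inter_cycIco_add A hij
  have := card_inter_cycIco_add B hij
  omega

theorem cpos_eq_cpos_add_of_cpos_lt {i j x : Fin n} (h : cpos j x < cpos j i) :
    cpos i x = cpos j x + cpos i j := by
  have := x.isLt; have := i.isLt; have := j.isLt
  rw [cpos_eq, cpos_eq] at h
  rw [cpos_eq, cpos_eq, cpos_eq]
  split_ifs at h ⊢ <;> omega

theorem cpos_eq_ite_cpos (i b x : Fin n) :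
    cpos b x = if cpos i b ≤ cpos i x then cpos i x - cpos i b else cpos i x + n - cpos i b := by
  have := x.isLt; have := i.isLt; have := b.isLt
  rw [cpos_eq, cpos_eq, cpos_eq]
  split_ifs <;> omega

theorem cyclicallyOrdered_of_cpos_lt {i a b c d : Fin n}
    (hab : cpos i a < cpos i b) (hbc : cpos i b < cpos i c) (hcd : cpos i c < cpos i d) :
    CyclicallyOrdered b c d a := by
  have := cpos_lt i d
  refine ⟨?_, ?_, ?_⟩ <;>
    simp only [cpos_eq_ite_cpos i b] <;> split_ifs <;> omega

end Cyclic

theorem stmt_8_general {n : ℕ} (I : Fin n → Finset (Fin n))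
    (i j : Fin n) (hij : i ≠ j) (heq : I i = I j)
    (J : Finset (Fin n)) (hJ : MemPositroid I J)
    (hws : WeaklySeparated J (I i)) :
    J ∩ cycIco i j = I i ∩ cycIco i j ∨ J ∩ cycIco j i = I i ∩ cycIco j i := by
  have hi : leShift i (I i) J := hJ i
  have hj : leShift j (I i) J := heq ▸ hJ j
  obtain ⟨hcard₁, hcard₂⟩ := hi.card_inter_cycIco_eq hij hj
  by_contra! hne
  obtain ⟨b₁, hb₁, a₁, ha₁, hlt₁, ha₁j⟩ := hi.exists_sdiff_lt hcard₁ (Ne.symm hne.1)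
  obtain ⟨b₂, hb₂, a₂, ha₂, hlt₂, ha₂i⟩ := hj.exists_sdiff_lt hcard₂ (Ne.symm hne.2)
  have hb₂_pos := cpos_eq_cpos_add_of_cpos_lt (hlt₂.trans ha₂i)
  have ha₂_pos := cpos_eq_cpos_add_of_cpos_lt ha₂i
  have hco : CyclicallyOrdered a₁ b₂ a₂ b₁ :=
    cyclicallyOrdered_of_cpos_lt (i := i) hlt₁ (by omega) (by omega)
  exact hws ⟨a₁, b₂, a₂, b₁, hco, ha₁, ha₂, hb₂, hb₁⟩

/-- If I_i = I_j and J ∈ M_I is weakly separated from I_i, then J agrees with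
I_i on [i,j) or on [j,i). -/
theorem stmt_8 {n k : ℕ} [NeZero n] (I : Fin n → Finset (Fin n))
    (hI : IsGrassmannNecklace k I) (i j : Fin n) (hij : i ≠ j) (heq : I i = I j)
    (J : Finset (Fin n)) (hJk : J.card = k) (hJ : MemPositroid I J)
    (hws : WeaklySeparated J (I i)) :
    J ∩ cycIco i j = I i ∩ cycIco i j ∨ J ∩ cycIco j i = I i ∩ cycIco j i :=
  stmt_8_general I i j hij heq J hJ hws
end

section
/- Let C be a weakly separated collection in binom([n],k) and let I, J ∈ C with |I∖J| = |J∖I| = 1. Write I∖J = {i}, J∖I = {j}, K = I∩J. Suppose the white clique W(K) = {Ka_1,...,Ka_r} (elements of C containing K, with a's cyclically ordered) and the black clique B(I∪J) = {L∖b_1,...,L∖b_s} both have at least 3 elements. Then either every a_m and every b_m lies in the closed cyclic interval [j,i], or every a_m and every b_m lies in [i,j]; consequently I and J are adjacent in the cyclic boundary of both cliques. -/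
/-!
Write `K = I ∩ J` and `L = I ∪ J`. A member of the white clique other than `I`, `J` is
`K ∪ {a}` with `a ∉ L`, and a member of the black clique other than `I`, `J` is `L ∖ {b}` with
`b ∈ K`. These two sets differ by `{a, b}` on one side and `{i, j}` on the other, so weak
separation puts `a` and `b` on the same side of the chord `ij`. As each clique has such a
member, all labels `a`, `b` lie on one common side, and `i`, `j` bound both closed arcs.
-/

open Finset

section CyclicOrder

variable {n : ℕ} {i j a b x : Fin n}

lemma cpos_eq_ite (i a : Fin n) :
    cpos i a = if i.val ≤ a.val then a.val - i.val else n + a.val - i.val := by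
  unfold cpos
  split_ifs with h
  · exact Fin.coe_sub_iff_le.mpr (Fin.le_iff_val_le_val.mpr h)
  · exact Fin.coe_sub_iff_lt.mpr (Fin.lt_def.mpr (not_le.mp h))

@[simp]
lemma mem_cycIco : x ∈ cycIco i j ↔ cpos i x < cpos i j := by
  simp [cycIco]

@[simp]
lemma mem_cycIcc : x ∈ cycIcc i j ↔ cpos i x ≤ cpos i j := by
  simp [cycIcc]

lemma left_mem_cycIcc (i j : Fin n) : i ∈ cycIcc i j := by
  simp [cpos_eq_ite]

lemma right_mem_cycIcc (i j : Fin n) : j ∈ cycIcc i j := by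
  simp

lemma cycIco_subset_cycIcc (i j : Fin n) : cycIco i j ⊆ cycIcc i j := fun _ hx =>
  mem_cycIcc.mpr (mem_cycIco.mp hx).le

lemma mem_cycIco_or_mem_cycIco (hij : i ≠ j) (hxj : x ≠ j) :
    x ∈ cycIco i j ∨ x ∈ cycIco j i := by
  rw [Ne, Fin.ext_iff] at hij hxj
  have := x.isLt
  simp only [mem_cycIco, cpos_eq_ite]
  split_ifs <;> omega

lemma cyclicallyOrdered_of_mem_cycIco_of_notMem (ha : a ∈ cycIco i j) (hb : b ∉ cycIco i j)
    (hai : a ≠ i) (hbj : b ≠ j) : CyclicallyOrdered a j b i := by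
  rw [Ne, Fin.ext_iff] at hai hbj
  have := a.isLt; have := b.isLt; have := i.isLt; have := j.isLt
  simp only [CyclicallyOrdered, mem_cycIco, cpos_eq_ite] at ha hb ⊢
  split_ifs at * <;> omega

end CyclicOrder

lemma WeaklySeparated.mem_cycIco_iff {n : ℕ} {X Y : Finset (Fin n)} {i j a b : Fin n}
    (h : WeaklySeparated X Y) (ha : a ∈ X \ Y) (hb : b ∈ X \ Y) (hi : i ∈ Y \ X)
    (hj : j ∈ Y \ X) : a ∈ cycIco i j ↔ b ∈ cycIco i j := by
  suffices key : ∀ {a b}, a ∈ X \ Y → b ∈ X \ Y → a ∈ cycIco i j → b ∈ cycIco i j from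
    ⟨key ha hb, key hb ha⟩
  intro a b ha hb haij
  by_contra hbij
  have hai : a ≠ i := fun h => (mem_sdiff.mp hi).2 (h ▸ (mem_sdiff.mp ha).1)
  have hbj : b ≠ j := fun h => (mem_sdiff.mp hj).2 (h ▸ (mem_sdiff.mp hb).1)
  exact h ⟨a, j, b, i, cyclicallyOrdered_of_mem_cycIco_of_notMem haij hbij hai hbj,
    ha, hb, hj, hi⟩

namespace Finset

variable {α : Type*} [DecidableEq α]

lemma exists_mem_ne_and_ne {s : Finset α} (hs : 3 ≤ s.card) (a b : α) :
    ∃ x ∈ s, x ≠ a ∧ x ≠ b := by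
  have : 1 < (s.erase a).card := by have := pred_card_le_card_erase (s := s) (a := a); omega
  obtain ⟨x, hx, hxb⟩ := (s.erase a).exists_mem_ne this b
  exact ⟨x, mem_of_mem_erase hx, ne_of_mem_erase hx, hxb⟩

lemma eq_insert_of_card_eq_add_one {K X : Finset α} {x : α} (hKX : K ⊆ X)
    (hcard : X.card = K.card + 1) (hx : x ∈ X \ K) : X = insert x K := by
  refine (eq_of_subset_of_card_le (insert_subset (mem_sdiff.mp hx).1 hKX) ?_).symm
  rw [card_insert_of_notMem (mem_sdiff.mp hx).2, hcard]

lemma eq_erase_of_card_add_one_eq {Y L : Finset α} {y : α} (hYL : Y ⊆ L)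
    (hcard : Y.card + 1 = L.card) (hy : y ∈ L \ Y) : Y = L.erase y := by
  refine eq_of_subset_of_card_le (fun z hz => mem_erase.mpr ⟨?_, hYL hz⟩) ?_
  · rintro rfl; exact (mem_sdiff.mp hy).2 hz
  · rw [card_erase_of_mem (mem_sdiff.mp hy).1]; omega

end Finset

section Neighbours

variable {n : ℕ} {C : Finset (Finset (Fin n))} {I J : Finset (Fin n)} {i j : Fin n}

lemma card_inter_add_one (hiD : I \ J = {i}) : (I ∩ J).card + 1 = I.card := by
  rw [← card_sdiff_add_card_inter I J, hiD, card_singleton, add_comm]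

lemma card_union_eq_add_one (hjD : J \ I = {j}) : (I ∪ J).card = I.card + 1 := by
  rw [← union_sdiff_self_eq_union, card_union_of_disjoint disjoint_sdiff, hjD, card_singleton]

lemma insert_inter_eq_left (hiD : I \ J = {i}) : insert i (I ∩ J) = I := by
  rw [insert_eq, ← hiD, sdiff_union_inter]

lemma erase_union_eq_right (hiD : I \ J = {i}) : (I ∪ J).erase i = J := by
  ext x
  have hx := congrArg (x ∈ ·) hiD
  simp only [mem_erase, mem_union, mem_sdiff, mem_singleton, eq_iff_iff] at hx ⊢
  tauto

lemma eq_or_eq_of_mem_union_of_notMem_inter (hiD : I \ J = {i}) (hjD : J \ I = {j})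
    {x : Fin n} (hx : x ∈ I ∪ J) (hxK : x ∉ I ∩ J) : x = i ∨ x = j := by
  have h : x ∈ I \ J ∨ x ∈ J \ I := by
    rw [mem_union] at hx
    rw [mem_inter] at hxK
    simp only [mem_sdiff]
    tauto
  rwa [hiD, hjD, mem_singleton, mem_singleton] at h

lemma mem_cycIco_iff_of_weaklySeparated (hiD : I \ J = {i}) (hjD : J \ I = {j}) {a b : Fin n}
    (ha : a ∉ I ∪ J) (hb : b ∈ I ∩ J)
    (hWS : WeaklySeparated (insert a (I ∩ J)) ((I ∪ J).erase b)) :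
    a ∈ cycIco i j ↔ b ∈ cycIco i j := by
  have hi : i ∈ I \ J := by simp [hiD]
  have hj : j ∈ J \ I := by simp [hjD]
  rw [mem_union] at ha
  rw [mem_inter] at hb
  rw [mem_sdiff] at hi hj
  refine hWS.mem_cycIco_iff ?_ ?_ ?_ ?_ <;> grind

lemma eq_insert_inter (hiD : I \ J = {i}) {X : Finset (Fin n)} (hX : X.card = I.card)
    (hKX : I ∩ J ⊆ X) {x : Fin n} (hx : x ∈ X \ (I ∩ J)) : X = insert x (I ∩ J) :=
  eq_insert_of_card_eq_add_one hKX (by rw [hX, card_inter_add_one hiD]) hx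

lemma eq_erase_union (hjD : J \ I = {j}) {Y : Finset (Fin n)} (hY : Y.card = I.card)
    (hYL : Y ⊆ I ∪ J) {y : Fin n} (hy : y ∈ (I ∪ J) \ Y) : Y = (I ∪ J).erase y :=
  eq_erase_of_card_add_one_eq hYL (by rw [hY, card_union_eq_add_one hjD]) hy

lemma exists_insert_inter_mem (hCI : ∀ X ∈ C, X.card = I.card) (hiD : I \ J = {i})
    (hjD : J \ I = {j}) (hW : 3 ≤ (C.filter (fun X => I ∩ J ⊆ X)).card) :
    ∃ a ∉ I ∪ J, insert a (I ∩ J) ∈ C := by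
  obtain ⟨X, hX, hXI, hXJ⟩ := exists_mem_ne_and_ne hW I J
  rw [mem_filter] at hX
  obtain ⟨a, haX, haK⟩ := exists_mem_notMem_of_card_lt_card (s := I ∩ J) (t := X)
    (by rw [hCI X hX.1, ← card_inter_add_one hiD]; omega)
  have hXa := eq_insert_inter hiD (hCI X hX.1) hX.2 (mem_sdiff.mpr ⟨haX, haK⟩)
  refine ⟨a, fun haL => ?_, hXa ▸ hX.1⟩
  rcases eq_or_eq_of_mem_union_of_notMem_inter hiD hjD haL haK with rfl | rfl
  · exact hXI (hXa.trans (insert_inter_eq_left hiD))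
  · exact hXJ (hXa.trans (by rw [inter_comm, insert_inter_eq_left hjD]))

lemma exists_erase_union_mem (hCI : ∀ X ∈ C, X.card = I.card) (hiD : I \ J = {i})
    (hjD : J \ I = {j}) (hB : 3 ≤ (C.filter (fun Y => Y ⊆ I ∪ J)).card) :
    ∃ b ∈ I ∩ J, (I ∪ J).erase b ∈ C := by
  obtain ⟨Y, hY, hYI, hYJ⟩ := exists_mem_ne_and_ne hB I J
  rw [mem_filter] at hY
  obtain ⟨b, hbL, hbY⟩ := exists_mem_notMem_of_card_lt_card (s := Y) (t := I ∪ J)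
    (by rw [hCI Y hY.1, card_union_eq_add_one hjD]; omega)
  have hYb := eq_erase_union hjD (hCI Y hY.1) hY.2 (mem_sdiff.mpr ⟨hbL, hbY⟩)
  refine ⟨b, ?_, hYb ▸ hY.1⟩
  by_contra hbK
  rcases eq_or_eq_of_mem_union_of_notMem_inter hiD hjD hbL hbK with rfl | rfl
  · exact hYJ (hYb.trans (erase_union_eq_right hiD))
  · exact hYI (hYb.trans (by rw [union_comm, erase_union_eq_right hjD]))

lemma clique_labels_mem_cycIcc (hC : IsWSCollection C) (hCI : ∀ X ∈ C, X.card = I.card)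
    (hiD : I \ J = {i}) (hjD : J \ I = {j}) {a b : Fin n}
    (ha : a ∉ I ∪ J) (haC : insert a (I ∩ J) ∈ C) (hai : a ∈ cycIco i j)
    (hb : b ∈ I ∩ J) (hbC : (I ∪ J).erase b ∈ C) :
    (∀ X ∈ C.filter (fun X => I ∩ J ⊆ X), ∀ x ∈ X \ (I ∩ J), x ∈ cycIcc i j) ∧
    (∀ Y ∈ C.filter (fun Y => Y ⊆ I ∪ J), ∀ y ∈ (I ∪ J) \ Y, y ∈ cycIcc i j) := by
  have side {a b : Fin n} (ha : a ∉ I ∪ J) (haC : insert a (I ∩ J) ∈ C) (hb : b ∈ I ∩ J)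
      (hbC : (I ∪ J).erase b ∈ C) : a ∈ cycIco i j ↔ b ∈ cycIco i j :=
    mem_cycIco_iff_of_weaklySeparated hiD hjD ha hb (hC _ haC _ hbC)
  have endpoint {x : Fin n} (hx : x ∈ I ∪ J) (hxK : x ∉ I ∩ J) : x ∈ cycIcc i j := by
    rcases eq_or_eq_of_mem_union_of_notMem_inter hiD hjD hx hxK with rfl | rfl
    exacts [left_mem_cycIcc _ _, right_mem_cycIcc _ _]
  constructor
  · intro X hX x hx
    rw [mem_filter] at hX
    by_cases hxL : x ∈ I ∪ J
    · exact endpoint hxL (mem_sdiff.mp hx).2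
    · have hXx := eq_insert_inter hiD (hCI X hX.1) hX.2 hx
      apply cycIco_subset_cycIcc
      rwa [side hxL (hXx ▸ hX.1) hb hbC, ← side ha haC hb hbC]
  · intro Y hY y hy
    rw [mem_filter] at hY
    by_cases hyK : y ∈ I ∩ J
    · have hYy := eq_erase_union hjD (hCI Y hY.1) hY.2 hy
      apply cycIco_subset_cycIcc
      rwa [← side ha haC hyK (hYy ▸ hY.1)]
    · exact endpoint (mem_sdiff.mp hy).1 hyK

end Neighbours

/-- If I, J are neighbors in a weakly separated collection C with nontrivial
white clique W(I∩J) and black clique B(I∪J), then all the clique elements lie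
in the closed cyclic interval [i,j], or all lie in [j,i]. -/
theorem stmt_10 {n k : ℕ} (C : Finset (Finset (Fin n)))
    (hCk : ∀ X ∈ C, X.card = k) (hC : IsWSCollection C)
    (I J : Finset (Fin n)) (hI : I ∈ C) (hJ : J ∈ C) (i j : Fin n)
    (hiD : I \ J = {i}) (hjD : J \ I = {j})
    (hW : 3 ≤ (C.filter (fun X => I ∩ J ⊆ X)).card)
    (hB : 3 ≤ (C.filter (fun X => X ⊆ I ∪ J)).card) :
    ((∀ X ∈ C.filter (fun X => I ∩ J ⊆ X), ∀ x ∈ X \ (I ∩ J), x ∈ cycIcc i j) ∧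
     (∀ Y ∈ C.filter (fun Y => Y ⊆ I ∪ J), ∀ y ∈ (I ∪ J) \ Y, y ∈ cycIcc i j)) ∨
    ((∀ X ∈ C.filter (fun X => I ∩ J ⊆ X), ∀ x ∈ X \ (I ∩ J), x ∈ cycIcc j i) ∧
     (∀ Y ∈ C.filter (fun Y => Y ⊆ I ∪ J), ∀ y ∈ (I ∪ J) \ Y, y ∈ cycIcc j i)) := by
  have hCI : ∀ X ∈ C, X.card = I.card := fun X hX => (hCk X hX).trans (hCk I hI).symm
  have hCJ : ∀ X ∈ C, X.card = J.card := fun X hX => (hCk X hX).trans (hCk J hJ).symm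
  obtain ⟨a, ha, haC⟩ := exists_insert_inter_mem hCI hiD hjD hW
  obtain ⟨b, hb, hbC⟩ := exists_erase_union_mem hCI hiD hjD hB
  have hij : i ≠ j := by
    simpa [hiD, hjD] using (disjoint_sdiff_sdiff : Disjoint (I \ J) (J \ I))
  have haj : a ≠ j := by
    rintro rfl
    exact ha (mem_union_right _ (mem_sdiff.mp (hjD ▸ mem_singleton_self a)).1)
  rcases mem_cycIco_or_mem_cycIco hij haj with hai | hai
  · exact Or.inl (clique_labels_mem_cycIcc hC hCI hiD hjD ha haC hai hb hbC)
  · simp only [inter_comm I J, union_comm I J] at ha haC hb hbC ⊢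
    exact Or.inr (clique_labels_mem_cycIcc hC hCJ hjD hiD ha haC hai hb hbC)
end
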